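/- There is a universal constant c > 0 such that the following holds. Let X be a finite nonempty set, F a finite class of functions X → {−1,1}, μ a probability distribution on F, and ρ a probability distribution on X. Sample f, g ∼ μ independently and x, z ∼ ρ independently (all four mutually independent). Then Pr[ g(z)·g(x)·f(x) = f(z) ] ≥ 1/2 + c·sq(F)^{−8}. (That is, the randomized predictor that predicts f(z) by g(z)·g(x)·f(x), for a fresh hypothesis g ∼ μ and a fresh labeled example (x, f(x)), succeeds with probability noticeably better than 1/2.) -/

import Mathlib

open MeasureTheory Finset

attribute [local instance] Classical.propDecidable

/-- `ρ` is a probability distribution on the finite type `X`. -/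
def IsDist {X : Type} [Fintype X] (ρ : X → ℝ) : Prop :=
  (∀ x, 0 ≤ ρ x) ∧ ∑ x, ρ x = 1

/-- `μ` is a probability distribution supported on the finite class `F`. -/
def IsDistOn {X : Type} [Fintype X] (F : Finset (X → ℝ)) (μ : (X → ℝ) → ℝ) : Prop :=
  (∀ f, 0 ≤ μ f) ∧ (∀ f ∉ F, μ f = 0) ∧ ∑ f ∈ F, μ f = 1

/-- The statistical query dimension of a finite class `F` of `±1`-valued functions. -/
noncomputable def sqDim {X : Type} [Fintype X] (F : Finset (X → ℝ)) : ℕ :=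
  sSup {d : ℕ | ∃ ρ : X → ℝ, IsDist ρ ∧ ∃ g : Fin d → (X → ℝ),
    Function.Injective g ∧ (∀ i, g i ∈ F) ∧
    ∀ i j, i ≠ j → |∑ x, ρ x * (g i x * g j x)| ≤ 1 / (d : ℝ)}

/-!
Since agreement of two `±1` values `a, b` has indicator `(1 + a b) / 2`, the success probability
is `1/2 + (1/2) E_{f,g} ⟨f, g⟩²`, with `⟨f, g⟩ = E_ρ[f g]`. Let `d = sq(F)` and `τ = 1/(d+1)`.
A maximal `S ⊆ F` with pairwise correlations at most `τ` has at most `d` elements, and by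
maximality every `f ∈ F` has `⟨f, s⟩² ≥ τ²` for some `s ∈ S`; averaging over `S` gives one `s` with
`E_f ⟨f, s⟩² ≥ τ² / d`. Finally `E_f ⟨f, s⟩² = ⟪E_f f ⊗ f, s ⊗ s⟫` in `L²(ρ ⊗ ρ)`, so Cauchy–Schwarz
bounds its square by `‖E_f f ⊗ f‖² = E_{f,g} ⟨f, g⟩²`, which is therefore at least `τ⁴ / d²`.
-/

section Correlation

variable {X : Type*} [Fintype X]

def corr (ρ f g : X → ℝ) : ℝ := ∑ x, ρ x * (f x * g x)

lemma corr_comm (ρ f g : X → ℝ) : corr ρ f g = corr ρ g f := by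
  simp only [corr, mul_comm (f _)]

lemma corr_self_of_sign {ρ f : X → ℝ} (hρ : ∑ x, ρ x = 1) (hf : ∀ x, f x = 1 ∨ f x = -1) :
    corr ρ f f = 1 := by
  rw [← hρ]
  refine sum_congr rfl fun x _ => ?_
  rcases hf x with h | h <;> simp [h]

lemma corr_sq_le {ρ : X → ℝ} (hρ : ∀ x, 0 ≤ ρ x) (f g : X → ℝ) :
    corr ρ f g ^ 2 ≤ corr ρ f f * corr ρ g g :=
  sum_sq_le_sum_mul_sum_of_sq_le_mul _ (fun x _ => mul_nonneg (hρ x) (mul_self_nonneg _))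
    (fun x _ => mul_nonneg (hρ x) (mul_self_nonneg _)) (fun x _ => le_of_eq (by ring))

lemma corr_sum_left {ι : Type*} (s : Finset ι) (c : ι → ℝ) (ρ : X → ℝ) (f : ι → X → ℝ)
    (g : X → ℝ) : corr ρ (fun x => ∑ i ∈ s, c i * f i x) g = ∑ i ∈ s, c i * corr ρ (f i) g := by
  simp only [corr, mul_sum, sum_mul]
  rw [sum_comm]
  exact sum_congr rfl fun i _ => sum_congr rfl fun x _ => by ring

lemma corr_sq_eq_corr_prod (ρ f g : X → ℝ) :
    corr ρ f g ^ 2 = corr (fun p : X × X => ρ p.1 * ρ p.2) (fun p => f p.1 * f p.2)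
      (fun p => g p.1 * g p.2) := by
  simp only [corr, sq, Fintype.sum_prod_type, sum_mul_sum]
  exact sum_congr rfl fun x _ => sum_congr rfl fun z _ => by ring

lemma sum_mul_corr_sq_sq_le {ρ : X → ℝ} (hρ : ∀ x, 0 ≤ ρ x) (F : Finset (X → ℝ))
    (μ : (X → ℝ) → ℝ) (s : X → ℝ) :
    (∑ f ∈ F, μ f * corr ρ f s ^ 2) ^ 2
      ≤ (∑ f ∈ F, ∑ g ∈ F, μ f * μ g * corr ρ f g ^ 2) * corr ρ s s ^ 2 := by
  set ρ₂ : X × X → ℝ := fun p => ρ p.1 * ρ p.2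
  set K : X × X → ℝ := fun p => ∑ f ∈ F, μ f * (f p.1 * f p.2)
  have hK : ∀ h : X → ℝ,
      ∑ f ∈ F, μ f * corr ρ f h ^ 2 = corr ρ₂ K (fun p => h p.1 * h p.2) := by
    intro h
    simp only [corr_sq_eq_corr_prod]
    exact (corr_sum_left ..).symm
  have hKK : ∑ f ∈ F, ∑ g ∈ F, μ f * μ g * corr ρ f g ^ 2 = corr ρ₂ K K := by
    rw [show corr ρ₂ K K = ∑ f ∈ F, μ f * corr ρ₂ (fun p => f p.1 * f p.2) K from
      corr_sum_left ..]
    refine sum_congr rfl fun f _ => ?_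
    rw [corr_comm, ← hK, mul_sum]
    exact sum_congr rfl fun g _ => by rw [corr_comm ρ g]; ring
  rw [hK, hKK, corr_sq_eq_corr_prod ρ s s]
  exact corr_sq_le (ρ := ρ₂) (fun p => mul_nonneg (hρ p.1) (hρ p.2)) _ _

lemma ite_eq_one_add_mul_div_two {a b : ℝ} (ha : a = 1 ∨ a = -1) (hb : b = 1 ∨ b = -1) :
    (if a = b then 1 else 0 : ℝ) = (1 + a * b) / 2 := by
  rcases ha with rfl | rfl <;> rcases hb with rfl | rfl <;> norm_num

lemma sum_sum_ite_eq_mul_one_add_corr_sq {ρ f g : X → ℝ} (hρ : ∑ x, ρ x = 1)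
    (hf : ∀ x, f x = 1 ∨ f x = -1) (hg : ∀ x, g x = 1 ∨ g x = -1) (w : ℝ) :
    ∑ x, ∑ z, (if g z * g x * f x = f z then w * ρ x * ρ z else 0)
      = w * (1 + corr ρ f g ^ 2) / 2 := by
  have hsign : ∀ x z, g z * g x * f x = 1 ∨ g z * g x * f x = -1 := by
    intro x z
    rcases hf x with h₁ | h₁ <;> rcases hg x with h₂ | h₂ <;>
      rcases hg z with h₃ | h₃ <;> simp [h₁, h₂, h₃]
  calc _ = ∑ x, ∑ z, w / 2 * (ρ x * ρ z + ρ x * (f x * g x) * (ρ z * (f z * g z))) := by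
        refine sum_congr rfl fun x _ => sum_congr rfl fun z _ => ?_
        rw [← boole_mul, ite_eq_one_add_mul_div_two (hsign x z) (hf z)]
        ring
    _ = w / 2 * ((∑ x, ρ x) * (∑ z, ρ z) + corr ρ f g * corr ρ f g) := by
        rw [corr, sum_mul_sum, sum_mul_sum, ← sum_add_distrib, mul_sum]
        exact sum_congr rfl fun x _ => by rw [← sum_add_distrib, mul_sum]
    _ = _ := by rw [hρ]; ring

lemma sum_ite_eq_half_add_half_sum_corr_sq {F : Finset (X → ℝ)}
    (hF : ∀ f ∈ F, ∀ x, f x = 1 ∨ f x = -1) {μ : (X → ℝ) → ℝ} (hμ : ∑ f ∈ F, μ f = 1)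
    {ρ : X → ℝ} (hρ : ∑ x, ρ x = 1) :
    ∑ f ∈ F, ∑ g ∈ F, ∑ x, ∑ z,
        (if g z * g x * f x = f z then μ f * μ g * ρ x * ρ z else 0)
      = 1 / 2 + (∑ f ∈ F, ∑ g ∈ F, μ f * μ g * corr ρ f g ^ 2) / 2 := by
  rw [sum_congr rfl fun f hf => sum_congr rfl fun g hg =>
    sum_sum_ite_eq_mul_one_add_corr_sq hρ (hF f hf) (hF g hg) (μ f * μ g)]
  simp only [mul_add, add_div, sum_add_distrib, ← sum_div, mul_one, ← sum_mul_sum, hμ]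

end Correlation

lemma Finset.exists_maximal_pairwise {α : Type*} (F : Finset α) {r : α → α → Prop}
    (hr : ∀ a b, r a b → r b a) :
    ∃ S ⊆ F, (S : Set α).Pairwise r ∧ ∀ f ∈ F, f ∉ S → ∃ s ∈ S, ¬ r f s := by
  obtain ⟨S, hSmem, hSmax⟩ :=
    (F.powerset.filter fun S : Finset α => (S : Set α).Pairwise r).exists_maximal ⟨∅, by simp⟩
  simp only [mem_filter, mem_powerset] at hSmem hSmax
  refine ⟨S, hSmem.1, hSmem.2, fun f hf hfS => ?_⟩
  by_contra! hfar
  have hins : (↑(insert f S) : Set α).Pairwise r := by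
    rw [coe_insert, Set.pairwise_insert]
    exact ⟨hSmem.2, fun s hs _ => ⟨hfar s hs, hr _ _ (hfar s hs)⟩⟩
  exact hfS (hSmax ⟨insert_subset hf hSmem.1, hins⟩ (subset_insert f S) (mem_insert_self f S))

lemma Finset.exists_div_card_le_sum_mul {α β : Type*} {F : Finset α} {S : Finset β}
    (hS : S.Nonempty) {μ : α → ℝ} (hμ₀ : ∀ f ∈ F, 0 ≤ μ f) (hμ : ∑ f ∈ F, μ f = 1)
    {φ : α → β → ℝ} {a : ℝ} (ha : ∀ f ∈ F, a ≤ ∑ s ∈ S, φ f s) :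
    ∃ s ∈ S, a / #S ≤ ∑ f ∈ F, μ f * φ f s := by
  refine exists_le_of_sum_le hS ?_
  calc ∑ _ ∈ S, a / #S = a := by
        rw [sum_const, nsmul_eq_mul, mul_div_cancel₀ _ (by exact_mod_cast hS.card_ne_zero)]
    _ = ∑ f ∈ F, μ f * a := by rw [← sum_mul, hμ, one_mul]
    _ ≤ ∑ f ∈ F, μ f * ∑ s ∈ S, φ f s := sum_le_sum fun f hf =>
        mul_le_mul_of_nonneg_left (ha f hf) (hμ₀ f hf)
    _ = ∑ s ∈ S, ∑ f ∈ F, μ f * φ f s := by simp only [mul_sum]; exact sum_comm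

lemma card_le_sqDim_of_pairwise_le_inv_card {X : Type} [Fintype X] {F S : Finset (X → ℝ)}
    {ρ : X → ℝ} (hρ : IsDist ρ) (hSF : S ⊆ F)
    (hS : (S : Set (X → ℝ)).Pairwise fun s t => |corr ρ s t| ≤ 1 / (#S : ℝ)) :
    #S ≤ sqDim F := by
  refine le_csSup ⟨#F, ?_⟩ ⟨ρ, hρ, fun i => S.equivFin.symm i, ?_, fun i => hSF (coe_mem _),
    fun i j hij => hS (coe_mem _) (coe_mem _) ?_⟩
  · rintro d ⟨-, -, g, hg, hgF, -⟩
    simpa using card_le_card_of_injOn (s := univ) g (fun i _ => hgF i) hg.injOn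
  · exact Subtype.val_injective.comp S.equivFin.symm.injective
  · exact fun h => hij (S.equivFin.symm.injective (Subtype.val_injective h))

lemma card_le_sqDim_of_pairwise_le_inv_succ {X : Type} [Fintype X] {F S : Finset (X → ℝ)}
    {ρ : X → ℝ} (hρ : IsDist ρ) (hSF : S ⊆ F)
    (hS : (S : Set (X → ℝ)).Pairwise fun s t => |corr ρ s t| ≤ 1 / (sqDim F + 1 : ℝ)) :
    #S ≤ sqDim F := by
  by_contra! h
  obtain ⟨T, hTS, hT⟩ := exists_subset_card_eq (Nat.succ_le_of_lt h)
  have := card_le_sqDim_of_pairwise_le_inv_card hρ (hTS.trans hSF)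
    (by rw [hT]; push_cast; exact hS.mono hTS)
  omega

theorem inv_le_sum_mul_corr_sq {X : Type} [Fintype X] {F : Finset (X → ℝ)}
    (hF : ∀ f ∈ F, ∀ x, f x = 1 ∨ f x = -1) {μ : (X → ℝ) → ℝ} (hμ₀ : ∀ f ∈ F, 0 ≤ μ f)
    (hμ : ∑ f ∈ F, μ f = 1) {ρ : X → ℝ} (hρ : IsDist ρ) :
    (((sqDim F + 1 : ℝ) ^ 2 * sqDim F) ^ 2)⁻¹
      ≤ ∑ f ∈ F, ∑ g ∈ F, μ f * μ g * corr ρ f g ^ 2 := by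
  set τ : ℝ := 1 / (sqDim F + 1)
  have hτ₀ : 0 < τ := by positivity
  have hτ₁ : τ ≤ 1 := div_le_one_of_le₀ (by simp) (by positivity)
  obtain ⟨S, hSF, hSτ, hSmax⟩ := F.exists_maximal_pairwise
    (r := fun s t => |corr ρ s t| ≤ τ) fun s t h => by rwa [corr_comm]
  have hcover : ∀ f ∈ F, τ ^ 2 ≤ ∑ s ∈ S, corr ρ f s ^ 2 := by
    intro f hf
    by_cases hfS : f ∈ S
    · calc τ ^ 2 ≤ corr ρ f f ^ 2 := by
            rw [corr_self_of_sign hρ.2 (hF f hf), one_pow]; exact pow_le_one₀ hτ₀.le hτ₁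
        _ ≤ _ := single_le_sum (fun s _ => sq_nonneg (corr ρ f s)) hfS
    · obtain ⟨s, hs, hfs⟩ := hSmax f hf hfS
      calc τ ^ 2 ≤ corr ρ f s ^ 2 :=
            sq_le_sq.mpr (by rw [abs_of_pos hτ₀]; exact (not_le.mp hfs).le)
        _ ≤ _ := single_le_sum (fun s _ => sq_nonneg (corr ρ f s)) hs
  have hSne : S.Nonempty := by
    obtain ⟨f, hf⟩ := nonempty_of_sum_ne_zero (hμ ▸ one_ne_zero)
    by_contra hS
    have := hcover f hf
    rw [not_nonempty_iff_eq_empty.mp hS, sum_empty] at this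
    exact (pow_pos hτ₀ 2).not_ge this
  obtain ⟨s, hs, hsμ⟩ := exists_div_card_le_sum_mul hSne hμ₀ hμ hcover
  have hSd : (#S : ℝ) ≤ sqDim F := by
    exact_mod_cast card_le_sqDim_of_pairwise_le_inv_succ hρ hSF hSτ
  have hS₀ : (0 : ℝ) < #S := by exact_mod_cast hSne.card_pos
  calc (((sqDim F + 1 : ℝ) ^ 2 * sqDim F) ^ 2)⁻¹ = (τ ^ 2 / sqDim F) ^ 2 := by
        simp only [τ]; field_simp
    _ ≤ (τ ^ 2 / #S) ^ 2 := by gcongr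
    _ ≤ (∑ f ∈ F, μ f * corr ρ f s ^ 2) ^ 2 := by gcongr
    _ ≤ (∑ f ∈ F, ∑ g ∈ F, μ f * μ g * corr ρ f g ^ 2) * corr ρ s s ^ 2 :=
        sum_mul_corr_sq_sq_le hρ.1 F μ s
    _ = _ := by rw [corr_self_of_sign hρ.2 (hF s (hSF hs)), one_pow, mul_one]

/-- The randomized predictor that guesses `f(z)` by `g(z)·g(x)·f(x)`, for an
independent fresh hypothesis `g ∼ μ` and fresh example `x ∼ ρ`, succeeds with
probability at least `1/2 + c·sq(F)⁻⁸`. -/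
theorem predict_success_probability :
    ∃ c : ℝ, 0 < c ∧
      ∀ (X : Type) [Fintype X] [Nonempty X] (F : Finset (X → ℝ)),
        (∀ f ∈ F, ∀ x, f x = 1 ∨ f x = -1) →
        ∀ μ : (X → ℝ) → ℝ, IsDistOn F μ →
        ∀ ρ : X → ℝ, IsDist ρ →
          1 / 2 + c / (sqDim F : ℝ) ^ 8 ≤
            ∑ f ∈ F, ∑ g ∈ F, ∑ x : X, ∑ z : X,
              (if g z * g x * f x = f z then μ f * μ g * ρ x * ρ z else 0) := by
  refine ⟨1 / 32, by norm_num, fun X _ _ F hF μ hμ ρ hρ => ?_⟩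
  rw [sum_ite_eq_half_add_half_sum_corr_sq hF hμ.2.2 hρ.2]
  obtain ⟨f, hf⟩ := nonempty_of_sum_ne_zero (hμ.2.2 ▸ one_ne_zero)
  have hd : (1 : ℝ) ≤ sqDim F := by
    exact_mod_cast card_le_sqDim_of_pairwise_le_inv_card (S := {f}) hρ
      (singleton_subset_iff.mpr hf) (by simp)
  have hden : ((sqDim F + 1 : ℝ) ^ 2 * sqDim F) ^ 2 ≤ 16 * (sqDim F : ℝ) ^ 8 := by
    calc ((sqDim F + 1 : ℝ) ^ 2 * sqDim F) ^ 2
        ≤ ((2 * sqDim F : ℝ) ^ 2 * (sqDim F : ℝ) ^ 2) ^ 2 := by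
          gcongr
          · linarith
          · exact le_self_pow₀ hd (by norm_num)
      _ = 16 * (sqDim F : ℝ) ^ 8 := by ring
  have hA := inv_le_sum_mul_corr_sq hF (fun f _ => hμ.1 f) hμ.2.2 hρ
  calc 1 / 2 + 1 / 32 / (sqDim F : ℝ) ^ 8 = 1 / 2 + (16 * (sqDim F : ℝ) ^ 8)⁻¹ / 2 := by ring
    _ ≤ _ := by gcongr; exact (inv_anti₀ (by positivity) hden).trans hA
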